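/- arXiv:1805.09535 — 5 statements merged into one kernel-verified Lean document; each statement's English description precedes it below -/
import Mathlib

section
/- Let E be a nontrivial one-variable word equation of the form (u0 X u1 ⋯ X un, v0 X v1 ⋯ X vn) with n ≥ 1 and constant words ui, vi. If x1 and x2 are both solution words of E with |x1| ≤ |x2|, then x1 is both a prefix and a suffix of x2. -/
/-- `assemble x [u₀, u₁, …, uₙ]` is the word `u₀ x u₁ x ⋯ x uₙ`. -/
def assemble {Γ : Type*} (x : List Γ) (cs : List (List Γ)) : List Γ :=
  (cs.intersperse x).flatten

section Aux

variable {Γ : Type*}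

lemma assemble_nil (x : List Γ) : assemble x [] = [] := rfl

lemma assemble_single (x a : List Γ) : assemble x [a] = a := by
  simp [assemble, List.intersperse]

lemma assemble_cons2 (x a b : List Γ) (t : List (List Γ)) :
    assemble x (a :: b :: t) = a ++ x ++ assemble x (b :: t) := by
  simp [assemble, List.intersperse]

/-- From `y ++ A = w ++ y ++ B` deduce `y <+: w ++ y`. -/
lemma pref_of_eq {y w A B : List Γ} (h : y ++ A = w ++ (y ++ B)) : y <+: w ++ y := by
  have h1 : y <+: (w ++ y) ++ B := by
    rw [List.append_assoc, ← h]; exact List.prefix_append _ _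
  exact List.prefix_of_prefix_length_le h1 (List.prefix_append _ _) (by simp)

/-- The key combinatorial extraction: from a nontrivial equation with one
solution, get a fixed nonempty word `w` such that every solution `y`
satisfies `y <+: w ++ y`. -/
lemma exists_w : ∀ (us vs : List (List Γ)), us.length = vs.length → us ≠ vs →
    ∀ x : List Γ, assemble x us = assemble x vs →
    ∃ w : List Γ, w ≠ [] ∧ ∀ y : List Γ, assemble y us = assemble y vs → y <+: w ++ y := by
  intro us
  induction us with
  | nil =>
    intro vs hlen hne x hx
    cases vs with
    | nil => exact absurd rfl hne
    | cons b t2 => simp at hlen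
  | cons a t1 ih =>
    intro vs hlen hne x hx
    cases vs with
    | nil => simp at hlen
    | cons b t2 =>
      by_cases hab : a = b
      · subst hab
        cases t1 with
        | nil =>
          cases t2 with
          | nil => exact absurd rfl hne
          | cons d t2' => simp at hlen
        | cons c t1' =>
          cases t2 with
          | nil => simp at hlen
          | cons d t2' =>
            rw [assemble_cons2, assemble_cons2] at hx
            have hx' : assemble x (c :: t1') = assemble x (d :: t2') := by
              simpa using hx
            have hne' : (c :: t1') ≠ (d :: t2') := by
              intro h; exact hne (by rw [h])
            obtain ⟨w, hw, hprop⟩ := ih (d :: t2') (by simpa using hlen) hne' x hx'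
            refine ⟨w, hw, fun y hy => ?_⟩
            rw [assemble_cons2, assemble_cons2] at hy
            exact hprop y (by simpa using hy)
      · -- a ≠ b : first difference
        cases t1 with
        | nil =>
          cases t2 with
          | nil =>
            rw [assemble_single, assemble_single] at hx
            exact absurd hx hab
          | cons d t2' => simp at hlen
        | cons c t1' =>
          cases t2 with
          | nil => simp at hlen
          | cons d t2' =>
            rw [assemble_cons2, assemble_cons2] at hx
            have hx' : a ++ (x ++ assemble x (c :: t1')) = b ++ (x ++ assemble x (d :: t2')) := by
              simpa [List.append_assoc] using hx
            rcases le_total a.length b.length with hl | hl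
            · -- a is a prefix of b
              have hpre : a <+: b := by
                have hp1 : a <+: b ++ (x ++ assemble x (d :: t2')) := by
                  rw [← hx']; exact List.prefix_append _ _
                exact List.prefix_of_prefix_length_le hp1 (List.prefix_append _ _) hl
              obtain ⟨w, hwb⟩ := hpre
              have hw : w ≠ [] := by rintro rfl; simp at hwb; exact hab hwb
              refine ⟨w, hw, fun y hy => ?_⟩
              rw [assemble_cons2, assemble_cons2, ← hwb] at hy
              have hy' : y ++ assemble y (c :: t1') = w ++ (y ++ assemble y (d :: t2')) := by
                apply List.append_cancel_left (as := a)
                simpa [List.append_assoc] using hy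
              exact pref_of_eq hy'
            · -- b is a prefix of a
              have hpre : b <+: a := by
                have hp1 : b <+: a ++ (x ++ assemble x (c :: t1')) := by
                  rw [hx']; exact List.prefix_append _ _
                exact List.prefix_of_prefix_length_le hp1 (List.prefix_append _ _) hl
              obtain ⟨w, hwb⟩ := hpre
              have hw : w ≠ [] := by rintro rfl; simp at hwb; exact hab hwb.symm
              refine ⟨w, hw, fun y hy => ?_⟩
              rw [assemble_cons2, assemble_cons2, ← hwb] at hy
              have hy' : y ++ assemble y (d :: t2') = w ++ (y ++ assemble y (c :: t1')) := by
                apply List.append_cancel_left (as := b)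
                simpa [List.append_assoc] using hy.symm
              exact pref_of_eq hy'

/-- `w` iterated `k` times. -/
def wpow (w : List Γ) : ℕ → List Γ
  | 0 => []
  | k + 1 => wpow w k ++ w

lemma wpow_length (w : List Γ) (k : ℕ) : (wpow w k).length = k * w.length := by
  induction k with
  | zero => simp [wpow]
  | succ k ih => simp [wpow, ih, Nat.succ_mul]

lemma prefix_wpow {w x : List Γ} (h : x <+: w ++ x) (k : ℕ) : x <+: wpow w k ++ x := by
  induction k with
  | zero => simp [wpow]
  | succ k ih =>
    have step : wpow w k ++ x <+: wpow w (k + 1) ++ x := by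
      obtain ⟨t, ht⟩ := h
      exact ⟨t, by rw [show wpow w (k+1) = wpow w k ++ w from rfl]; simp [← ht]⟩
    exact ih.trans step

lemma prefix_of_selfpref {w x₁ x₂ : List Γ} (hw : w ≠ [])
    (h1 : x₁ <+: w ++ x₁) (h2 : x₂ <+: w ++ x₂) (hle : x₁.length ≤ x₂.length) :
    x₁ <+: x₂ := by
  set k := x₂.length with hk
  have hwl : 1 ≤ w.length := List.length_pos_iff.mpr hw
  have hkl : x₂.length ≤ (wpow w k).length := by
    rw [wpow_length]
    calc x₂.length = k * 1 := by omega
    _ ≤ k * w.length := Nat.mul_le_mul_left k hwl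
  have p1 : x₁ <+: wpow w k :=
    List.prefix_of_prefix_length_le (prefix_wpow h1 k) (List.prefix_append _ _)
      (le_trans hle hkl)
  have p2 : x₂ <+: wpow w k :=
    List.prefix_of_prefix_length_le (prefix_wpow h2 k) (List.prefix_append _ _) hkl
  exact List.prefix_of_prefix_length_le p1 p2 hle

lemma assemble_append_single (x : List Γ) (L : List (List Γ)) (z : List Γ) (hL : L ≠ []) :
    assemble x (L ++ [z]) = assemble x L ++ x ++ z := by
  induction L with
  | nil => exact absurd rfl hL
  | cons a t ih =>
    cases t with
    | nil => simp [assemble_single, assemble_cons2]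
    | cons b t' =>
      have h1 : (a :: b :: t') ++ [z] = a :: b :: (t' ++ [z]) := rfl
      rw [h1, assemble_cons2, assemble_cons2]
      have h2 : (b :: t') ++ [z] = b :: (t' ++ [z]) := rfl
      rw [← h2, ih (by simp)]
      simp [List.append_assoc]

lemma assemble_reverse (x : List Γ) (cs : List (List Γ)) :
    (assemble x cs).reverse = assemble x.reverse ((cs.map List.reverse).reverse) := by
  induction cs with
  | nil => simp [assemble_nil]
  | cons a t ih =>
    cases t with
    | nil => simp [assemble_single]
    | cons b t' =>
      rw [assemble_cons2]
      have h1 : (((a :: b :: t').map List.reverse).reverse)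
          = ((b :: t').map List.reverse).reverse ++ [a.reverse] := by simp
      rw [h1, assemble_append_single _ _ _ (by simp)]
      simp [ih]

lemma prefix_key (us vs : List (List Γ)) (hlen : us.length = vs.length)
    (hne : us ≠ vs) (x₁ x₂ : List Γ)
    (h₁ : assemble x₁ us = assemble x₁ vs)
    (h₂ : assemble x₂ us = assemble x₂ vs)
    (hle : x₁.length ≤ x₂.length) : x₁ <+: x₂ := by
  obtain ⟨w, hw, hprop⟩ := exists_w us vs hlen hne x₁ h₁
  exact prefix_of_selfpref hw (hprop x₁ h₁) (hprop x₂ h₂) hle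

end Aux

/-- for a nontrivial one-variable equation
`u₀ X u₁ ⋯ X uₙ = v₀ X v₁ ⋯ X vₙ` (n ≥ 1), if x₁ and x₂ are solution words
with |x₁| ≤ |x₂|, then x₁ is a prefix and a suffix of x₂. -/
theorem shorter_solution_prefix_suffix {Γ : Type*}
    (us vs : List (List Γ)) (hlen : us.length = vs.length) (hn : 2 ≤ us.length)
    (hnontriv : us ≠ vs)
    (x₁ x₂ : List Γ)
    (h₁ : assemble x₁ us = assemble x₁ vs)
    (h₂ : assemble x₂ us = assemble x₂ vs)
    (hle : x₁.length ≤ x₂.length) :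
    x₁ <+: x₂ ∧ x₁ <:+ x₂ := by
  constructor
  · exact prefix_key us vs hlen hnontriv x₁ x₂ h₁ h₂ hle
  · -- reverse everything
    set us' := (us.map List.reverse).reverse with hus'
    set vs' := (vs.map List.reverse).reverse with hvs'
    have hlen' : us'.length = vs'.length := by simp [hus', hvs', hlen]
    have hne' : us' ≠ vs' := by
      intro h
      apply hnontriv
      have := congrArg (fun l => (List.reverse l).map List.reverse) h
      simpa [hus', hvs', List.map_map, Function.comp] using this
    have h₁' : assemble x₁.reverse us' = assemble x₁.reverse vs' := by
      rw [hus', hvs', ← assemble_reverse, ← assemble_reverse, h₁]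
    have h₂' : assemble x₂.reverse us' = assemble x₂.reverse vs' := by
      rw [hus', hvs', ← assemble_reverse, ← assemble_reverse, h₂]
    have := prefix_key us' vs' hlen' hne' x₁.reverse x₂.reverse h₁' h₂' (by simpa using hle)
    exact List.reverse_prefix.mp this
end

section
/- Let E be a one-variable word equation with finite solution set {[x0], ..., [xm]} where |x0| ≤ |xi| for all i. Then there exists a one-variable equation E' whose solution set is exactly {[ε], [x0⁻¹x1], ..., [x0⁻¹xm]} (each xi has x0 as a prefix, and x0⁻¹xi denotes removing that prefix). -/
/-!
If `U ≠ V`, strip the longest common prefix of the two sides. Either one side is exhausted, which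
forces every solution to be empty, or the sides differ in a constant `a` facing the variable.
Then every solution `x` is a prefix of `a w x …`, where `w` is the constant block preceding the
first variable on the other side, so all solutions are prefixes of the single infinite word
`(a w)^ω` and are ordered by the prefix relation. If `U = V`, every word is a solution, so
finiteness of the solution set forces `Γ` to be empty. The quotient equation `E'` is `E` with
the variable replaced by `x₀ X`.
-/

/-- Substitute the word `x` for the variable (represented by `none`) in a word
over `Option Γ` (constants are `some a`). -/
def subst {Γ : Type*} (x : List Γ) (U : List (Option Γ)) : List Γ :=
  U.flatMap fun c => c.elim x fun a => [a]

open List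

section

variable {Γ : Type*}

@[simp]
lemma subst_nil (x : List Γ) : subst x [] = [] := rfl

@[simp]
lemma subst_cons (x : List Γ) (c : Option Γ) (U : List (Option Γ)) :
    subst x (c :: U) = c.elim x (fun a => [a]) ++ subst x U :=
  flatMap_cons

@[simp]
lemma subst_append (x : List Γ) (U V : List (Option Γ)) :
    subst x (U ++ V) = subst x U ++ subst x V :=
  flatMap_append

@[simp]
lemma subst_map_some (x w : List Γ) : subst x (w.map some) = w := by
  induction w <;> simp_all

lemma eq_nil_of_subst_cons_eq_nil {x : List Γ} {c : Option Γ} {U : List (Option Γ)}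
    (h : subst x (c :: U) = []) : x = [] := by
  cases c <;> simp_all

lemma prefix_of_prefix_append_self {p x z : List Γ} (hp : p ≠ [])
    (hx : x <+: p ++ x) (hz : z <+: p ++ z) (hxz : x.length ≤ z.length) : x <+: z := by
  rcases le_or_gt x.length p.length with hxp | hpx
  · have : x <+: p := prefix_of_prefix_length_le hx (prefix_append p x) hxp
    exact prefix_of_prefix_length_le (this.trans (prefix_append p z)) hz hxz
  · obtain ⟨x', rfl⟩ : p <+: x := prefix_of_prefix_length_le (prefix_append p x) hx hpx.le
    obtain ⟨z', rfl⟩ : p <+: z :=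
      prefix_of_prefix_length_le (prefix_append p z) hz (by simp at hxz ⊢; omega)
    have hx' : x' <+: p ++ x' := (prefix_append_right_inj p).1 (hx.trans (by simp))
    have hz' : z' <+: p ++ z' := (prefix_append_right_inj p).1 (hz.trans (by simp))
    have : x'.length < (p ++ x').length := by simpa using length_pos_iff.2 hp
    exact (prefix_append_right_inj p).2
      (prefix_of_prefix_append_self hp hx' hz' (by simpa using hxz))
termination_by x.length

lemma prefix_of_prefix_append_subst {w x y : List Γ} {V : List (Option Γ)} (hw : w ≠ [])
    (hx : x <+: w ++ subst x V) (hy : y <+: w ++ subst y V) (hxy : x.length ≤ y.length) :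
    x <+: y := by
  induction V generalizing w with
  | nil => exact prefix_of_prefix_length_le (by simpa using hx) (by simpa using hy) hxy
  | cons c V ih =>
    cases c with
    | some a => exact ih (w := w ++ [a]) (by simp) (by simpa using hx) (by simpa using hy)
    | none =>
      have self_prefix {z : List Γ} (hz : z <+: w ++ subst z (none :: V)) : z <+: w ++ z :=
        prefix_of_prefix_length_le (by simpa using hz) (prefix_append (w ++ z) (subst z V))
          (by simp)
      exact prefix_of_prefix_append_self hw (self_prefix hx) (self_prefix hy) hxy

lemma prefix_of_subst_none_cons_eq_subst_some_cons {a : Γ} {U V : List (Option Γ)}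
    {x y : List Γ} (hx : subst x (none :: U) = subst x (some a :: V))
    (hy : subst y (none :: U) = subst y (some a :: V)) (hxy : x.length ≤ y.length) :
    x <+: y := by
  have solution_prefix {z : List Γ} (hz : subst z (none :: U) = subst z (some a :: V)) :
      z <+: [a] ++ subst z V := by
    simp only [subst_cons, Option.elim] at hz
    exact ⟨_, hz⟩
  exact prefix_of_prefix_append_subst (cons_ne_nil a []) (solution_prefix hx)
    (solution_prefix hy) hxy

lemma prefix_of_subst_eq {U V : List (Option Γ)} (hUV : U ≠ V) {x y : List Γ}
    (hx : subst x U = subst x V) (hy : subst y U = subst y V) (hxy : x.length ≤ y.length) :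
    x <+: y := by
  induction U generalizing V with
  | nil =>
    cases V with
    | nil => exact absurd rfl hUV
    | cons d V => simp [eq_nil_of_subst_cons_eq_nil hx.symm]
  | cons c U ih =>
    cases V with
    | nil => simp [eq_nil_of_subst_cons_eq_nil hx]
    | cons d V =>
      by_cases hcd : c = d
      · subst hcd
        simp only [subst_cons, append_cancel_left_eq] at hx hy
        exact ih (fun h => hUV (h ▸ rfl)) hx hy
      · match c, d with
        | none, none => exact absurd rfl hcd
        | none, some a => exact prefix_of_subst_none_cons_eq_subst_some_cons hx hy hxy
        | some a, none => exact prefix_of_subst_none_cons_eq_subst_some_cons hx.symm hy.symm hxy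
        | some a, some b => simp_all

lemma isEmpty_of_forall_mem {xs : List (List Γ)} (h : ∀ x, x ∈ xs) : IsEmpty Γ := by
  by_contra hΓ
  have : Nonempty Γ := not_isEmpty_iff.1 hΓ
  exact Set.infinite_univ (α := List Γ) ((finite_toSet xs).subset fun x _ => h x)

/-- Replace the variable by the pattern `W`. -/
def substVar (W U : List (Option Γ)) : List (Option Γ) :=
  U.flatMap fun c => c.elim W fun a => [some a]

@[simp]
lemma subst_substVar (x : List Γ) (W U : List (Option Γ)) :
    subst x (substVar W U) = subst (subst x W) U := by
  induction U with
  | nil => rfl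
  | cons c U ih => cases c <;> simp_all [substVar]

end

/-- if a one-variable equation E has finite solution set
{x₀, …, xₘ} with x₀ of minimal length, then x₀ is a prefix of every solution
word and there is a one-variable equation E' whose solution set is exactly
{ε} ∪ {x₀⁻¹xᵢ : 0 ≤ i ≤ m}, i.e. exactly the words x with x₀·x ∈ sol(E). -/
theorem quotient_equation {Γ : Type*} (U V : List (Option Γ))
    (xs : List (List Γ))
    (hsol : ∀ x : List Γ, subst x U = subst x V ↔ x ∈ xs)
    (x₀ : List Γ) (hx₀ : x₀ ∈ xs) (hmin : ∀ x ∈ xs, x₀.length ≤ x.length) :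
    (∀ x ∈ xs, x₀ <+: x) ∧
    ∃ U' V' : List (Option Γ),
      {x : List Γ | subst x U' = subst x V'} = {x : List Γ | x₀ ++ x ∈ xs} := by
  refine ⟨fun x hx => ?_, substVar (x₀.map some ++ [none]) U,
    substVar (x₀.map some ++ [none]) V, ?_⟩
  · by_cases hUV : U = V
    · subst hUV
      have : IsEmpty Γ := isEmpty_of_forall_mem fun x => (hsol x).1 rfl
      cases x₀ with
      | nil => exact nil_prefix
      | cons a _ => exact isEmptyElim a
    · exact prefix_of_subst_eq hUV ((hsol x₀).2 hx₀) ((hsol x).2 hx) (hmin x hx)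
  · ext x
    simp [hsol]
end

section
/- Let the one-variable equation (u0 X u1 ⋯ X un, v0 X v1 ⋯ X vn) with u0 = vn = ε have solution set exactly [p*] for a primitive word p. Let j ∈ {0,...,n} be the largest index such that the lengths of u0,...,u_{j−1} and v0,...,v_{j−1} are all divisible by |p|. Then j > 0 and |v0⋯v_{j−1}| − |u0⋯uj| ≤ |p|. -/
/-- `listPow w k` is the word `w^k`. -/
def listPow {Γ : Type*} (w : List Γ) (k : ℕ) : List Γ :=
  (List.replicate k w).flatten

/-- A word is primitive if it is nonempty and not a proper power. -/
def Primitive {Γ : Type*} (p : List Γ) : Prop :=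
  p ≠ [] ∧ ∀ (q : List Γ) (k : ℕ), p = listPow q k → k = 1

namespace CutPointAux

variable {Γ : Type*}

theorem listPow_zero (w : List Γ) : listPow w 0 = [] := rfl

theorem listPow_one (w : List Γ) : listPow w 1 = w := by
  unfold listPow
  rw [List.replicate_one, List.flatten_cons, List.flatten_nil, List.append_nil]

theorem listPow_add (w : List Γ) (a b : ℕ) :
    listPow w (a + b) = listPow w a ++ listPow w b := by
  unfold listPow
  rw [List.replicate_add, List.flatten_append]

theorem length_listPow (w : List Γ) (k : ℕ) :
    (listPow w k).length = k * w.length := by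
  induction k with
  | zero => simp [listPow_zero]
  | succ n ih =>
    have h : listPow w (n + 1) = listPow w n ++ w := by rw [listPow_add, listPow_one]
    rw [h, List.length_append, ih, Nat.succ_mul]

/-- commuting words are powers of a common word -/
theorem comm_pow (a b : List Γ) (h : a ++ b = b ++ a) :
    ∃ (w : List Γ) (k l : ℕ), a = listPow w k ∧ b = listPow w l := by
  generalize hn : a.length + b.length = n
  induction n using Nat.strong_induction_on generalizing a b with
  | _ n ih =>
  by_cases ha : a = []
  · exact ⟨b, 0, 1, by simp [ha, listPow_zero], (listPow_one b).symm⟩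
  by_cases hb : b = []
  · exact ⟨a, 1, 0, (listPow_one a).symm, by simp [hb, listPow_zero]⟩
  rcases le_total a.length b.length with hle | hle
  · -- a is a prefix of b
    have hpre : b = a ++ b.drop a.length := by
      have h1 : (a ++ b).take a.length = a := by simp
      have h2 : (b ++ a).take a.length = b.take a.length := by
        rw [List.take_append, Nat.sub_eq_zero_of_le hle,
          List.take_zero, List.append_nil]
      have h3 : a = b.take a.length := by
        conv_lhs => rw [← h1, h, h2]
      conv_lhs => rw [← List.take_append_drop a.length b, ← h3]
    set c := b.drop a.length with hc
    have hcomm : a ++ c = c ++ a := by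
      have : a ++ (a ++ c) = (a ++ c) ++ a := by rw [← hpre]; exact h
      simpa [List.append_assoc] using this
    have hlt : a.length + c.length < n := by
      have : b.length = a.length + c.length := by
        rw [hpre]; simp
      have hal : 0 < a.length := List.length_pos_iff.mpr ha
      omega
    obtain ⟨w, k, l, hak, hcl⟩ := ih _ hlt a c hcomm rfl
    exact ⟨w, k, k + l, hak, by rw [hpre, hak, hcl, ← listPow_add]⟩
  · -- b is a prefix of a
    have hpre : a = b ++ a.drop b.length := by
      have h1 : (b ++ a).take b.length = b := by simp
      have h2 : (a ++ b).take b.length = a.take b.length := by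
        rw [List.take_append, Nat.sub_eq_zero_of_le hle,
          List.take_zero, List.append_nil]
      have h3 : b = a.take b.length := by
        conv_lhs => rw [← h1, ← h, h2]
      conv_lhs => rw [← List.take_append_drop b.length a, ← h3]
    set c := a.drop b.length with hc
    have hcomm : b ++ c = c ++ b := by
      have : b ++ (b ++ c) = (b ++ c) ++ b := by rw [← hpre]; exact h.symm
      simpa [List.append_assoc] using this
    have hlt : b.length + c.length < n := by
      have : a.length = b.length + c.length := by
        rw [hpre]; simp
      have hbl : 0 < b.length := List.length_pos_iff.mpr hb
      omega
    obtain ⟨w, k, l, hbk, hcl⟩ := ih _ hlt b c hcomm rfl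
    exact ⟨w, k + l, k, by rw [hpre, hbk, hcl, ← listPow_add], hbk⟩

theorem prim_rot {p : List Γ} (hp : Primitive p) (r : ℕ) (hr : r < p.length)
    (h : p.drop r ++ p.take r = p) : r = 0 := by
  by_contra hr0
  have hrpos : 0 < r := Nat.pos_of_ne_zero hr0
  have h2 : p.take r ++ p.drop r = p := List.take_append_drop r p
  have hcomm : p.take r ++ p.drop r = p.drop r ++ p.take r := by rw [h, h2]
  obtain ⟨w, k, l, hak, hbl⟩ := comm_pow _ _ hcomm
  have hpw : p = listPow w (k + l) := by
    rw [← h2, hak, hbl, ← listPow_add]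
  have hk1 : k + l = 1 := hp.2 w (k + l) hpw
  have hka : 0 < k := by
    by_contra hk
    have : p.take r = [] := by rw [hak]; simp at hk; simp [hk, listPow_zero]
    have : (p.take r).length = 0 := by rw [this]; rfl
    simp [Nat.min_eq_left (le_of_lt hr)] at this
    omega
  have hla : 0 < l := by
    by_contra hl
    have : p.drop r = [] := by rw [hbl]; simp at hl; simp [hl, listPow_zero]
    have : (p.drop r).length = 0 := by rw [this]; rfl
    simp at this
    omega
  omega

/-- an occurrence of `p` inside `p^i` is at an offset divisible by `|p|` -/
theorem occ {p : List Γ} (hp : Primitive p) (i t : ℕ)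
    (ht : t + p.length ≤ i * p.length)
    (h : ((listPow p i).drop t).take p.length = p) : p.length ∣ t := by
  have hL : 0 < p.length := List.length_pos_iff.mpr hp.1
  obtain ⟨q, r, hrL, htqr⟩ : ∃ q r, r < p.length ∧ t = q * p.length + r :=
    ⟨t / p.length, t % p.length, Nat.mod_lt _ hL, by
      rw [Nat.mul_comm]; exact (Nat.div_add_mod t p.length).symm⟩
  rcases Nat.eq_zero_or_pos r with hr0 | hrpos
  · exact ⟨q, by rw [htqr, hr0, Nat.add_zero, Nat.mul_comm]⟩
  exfalso
  have hqi : q + 2 ≤ i := by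
    by_contra hqi
    push_neg at hqi
    have : i * p.length ≤ (q + 1) * p.length := Nat.mul_le_mul_right p.length (by omega)
    have : i * p.length ≤ q * p.length + p.length := by rw [Nat.succ_mul] at this; omega
    omega
  -- decompose p^i = p^q ++ p ++ p ++ p^(i-q-2)
  have hdecomp : listPow p i = listPow p q ++ (p ++ (p ++ listPow p (i - q - 2))) := by
    have hie : i = q + (1 + (1 + (i - q - 2))) := by omega
    conv_lhs => rw [hie]
    rw [listPow_add, listPow_add, listPow_add, listPow_one]
  rw [hdecomp] at h
  have hlq : (listPow p q).length = q * p.length := length_listPow p q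
  rw [List.drop_append, hlq] at h
  have hdq : (listPow p q).drop t = [] := by
    apply List.drop_eq_nil_of_le
    rw [hlq]; omega
  have htq : t - q * p.length = r := by omega
  rw [hdq, htq, List.nil_append] at h
  rw [List.drop_append] at h
  have hrp : r - p.length = 0 := by omega
  rw [hrp, List.drop_zero] at h
  rw [List.take_append] at h
  have hld : (p.drop r).length = p.length - r := by simp
  have h1 : (p.drop r).take p.length = p.drop r := List.take_of_length_le (by simp)
  have h2 : p.length - (p.drop r).length = r := by rw [hld]; omega
  rw [h1, h2, List.take_append] at h
  have h3 : p.take r ++ (listPow p (i - q - 2)).take (r - p.length) = p.take r := by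
    rw [hrp, List.take_zero, List.append_nil]
  rw [h3] at h
  exact hrpos.ne' (prim_rot hp r hrL h)

theorem cross {p : List Γ} (hp : Primitive p) (s y z w : List Γ) (i : ℕ)
    (h : s ++ (listPow p i ++ y) = z ++ (p ++ w))
    (h1 : s.length ≤ z.length)
    (h2 : z.length + p.length ≤ s.length + i * p.length) :
    p.length ∣ (z.length - s.length) := by
  have hL : 0 < p.length := List.length_pos_iff.mpr hp.1
  apply occ hp i (z.length - s.length) (by omega)
  have e1 : (s ++ (listPow p i ++ y)).drop z.length
      = (listPow p i).drop (z.length - s.length) ++ y := by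
    rw [List.drop_append, List.drop_eq_nil_of_le h1, List.nil_append,
      List.drop_append]
    have hz : z.length - s.length - (listPow p i).length = 0 := by
      rw [length_listPow]; omega
    rw [hz, List.drop_zero]
  have e2 : (z ++ (p ++ w)).drop z.length = p ++ w := by
    rw [List.drop_append, List.drop_eq_nil_of_le (le_refl z.length),
      Nat.sub_self, List.drop_zero, List.nil_append]
  have hd := congrArg (List.drop z.length) h
  rw [e1, e2] at hd
  have ht := congrArg (List.take p.length) hd
  have f1 : ((listPow p i).drop (z.length - s.length) ++ y).take p.length
      = ((listPow p i).drop (z.length - s.length)).take p.length := by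
    rw [List.take_append]
    have hz : p.length - ((listPow p i).drop (z.length - s.length)).length = 0 := by
      rw [List.length_drop, length_listPow]; omega
    rw [hz, List.take_zero, List.append_nil]
  have f2 : (p ++ w).take p.length = p := by
    rw [List.take_append, Nat.sub_self, List.take_zero, List.append_nil,
      List.take_length]
  rw [f1, f2] at ht
  exact ht

theorem assemble_singleton (x : List Γ) (c : List Γ) : assemble x [c] = c := by
  simp [assemble]

theorem assemble_cons (x c : List Γ) (cs : List (List Γ)) (h : cs ≠ []) :
    assemble x (c :: cs) = c ++ (x ++ assemble x cs) := by
  cases cs with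
  | nil => exact absurd rfl h
  | cons d ds => simp [assemble, List.intersperse_cons_cons]

theorem assemble_nil_eq (cs : List (List Γ)) : assemble [] cs = cs.flatten := by
  induction cs with
  | nil => rfl
  | cons c cs ih =>
    cases cs with
    | nil => simp [assemble_singleton]
    | cons d ds =>
      rw [assemble_cons [] c (d :: ds) (by simp), ih, List.nil_append]
      simp [List.flatten_cons]

theorem length_assemble (x : List Γ) (cs : List (List Γ)) (h : cs ≠ []) :
    (assemble x cs).length = cs.flatten.length + (cs.length - 1) * x.length := by
  induction cs with
  | nil => exact absurd rfl h
  | cons c cs ih =>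
    cases cs with
    | nil => simp [assemble_singleton]
    | cons d ds =>
      rw [assemble_cons x c (d :: ds) (by simp)]
      simp only [List.length_append, ih (by simp), List.flatten_cons, List.length_cons]
      have h2 : (ds.length + 1 + 1 - 1) * x.length
          = (ds.length + 1 - 1) * x.length + x.length := by
        simp [Nat.succ_mul]
      omega

theorem assemble_split (x : List Γ) (cs : List (List Γ)) (k : ℕ) (hk : 0 < k)
    (hlt : k < cs.length) :
    assemble x cs = assemble x (cs.take k) ++ (x ++ assemble x (cs.drop k)) := by
  induction cs generalizing k with
  | nil => simp at hlt
  | cons c cs ih =>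
    match k, hk with
    | 1, _ =>
      have hne : cs ≠ [] := by
        simp only [List.length_cons] at hlt
        exact List.ne_nil_of_length_pos (by omega)
      simp [assemble_cons x c cs hne, assemble_singleton]
    | (k + 2), _ =>
      simp only [List.length_cons] at hlt
      have h1 : k + 1 < cs.length := by omega
      have hne : cs ≠ [] := List.ne_nil_of_length_pos (by omega)
      have htne : cs.take (k + 1) ≠ [] := by
        apply List.ne_nil_of_length_pos
        rw [List.length_take]
        omega
      rw [assemble_cons x c cs hne, ih (k + 1) (by omega) h1,
        List.take_succ_cons, List.drop_succ_cons,
        assemble_cons x c (cs.take (k + 1)) htne]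
      simp [List.append_assoc]

theorem flatten_take_succ (cs : List (List Γ)) (k : ℕ) (h : k < cs.length) :
    ((cs.take (k + 1)).flatten).length
      = ((cs.take k).flatten).length + (cs.getD k []).length := by
  conv_lhs => rw [List.take_succ, List.getElem?_eq_getElem h]
  rw [List.flatten_append, List.length_append]
  simp [List.getD_eq_getElem cs [] h, List.getElem?_eq_getElem h]

theorem dvd_flatten_take (cs : List (List Γ)) (L j : ℕ) (hj : j ≤ cs.length)
    (h : ∀ i < j, L ∣ (cs.getD i []).length) :
    L ∣ ((cs.take j).flatten).length := by
  induction j with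
  | zero => simp
  | succ k ih =>
    rw [flatten_take_succ cs k (by omega)]
    exact (ih (by omega) (fun i hi => h i (by omega))).add (h k (by omega))

theorem block_cross {p : List Γ} (hp : Primitive p) (as bs : List (List Γ))
    (i k m : ℕ) (hi : 1 ≤ i)
    (hE : assemble (listPow p i) as = assemble (listPow p i) bs)
    (hk0 : 0 < k) (hk : k < as.length) (hm0 : 0 < m) (hm : m < bs.length)
    (h1 : ((as.take k).flatten).length + (k - 1) * (i * p.length)
        ≤ ((bs.take m).flatten).length + (m - 1) * (i * p.length))
    (h2 : ((bs.take m).flatten).length + (m - 1) * (i * p.length) + p.length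
        ≤ ((as.take k).flatten).length + (k - 1) * (i * p.length) + i * p.length) :
    p.length ∣ (((bs.take m).flatten).length + (m - 1) * (i * p.length)
              - (((as.take k).flatten).length + (k - 1) * (i * p.length))) := by
  set x := listPow p i with hx
  rw [assemble_split x as k hk0 hk, assemble_split x bs m hm0 hm] at hE
  have hxp : x = p ++ listPow p (i - 1) := by
    rw [hx]
    have : i = 1 + (i - 1) := by omega
    conv_lhs => rw [this]
    rw [listPow_add, listPow_one]
  have hE2 : assemble x (as.take k) ++ (listPow p i ++ assemble x (as.drop k))
      = assemble x (bs.take m) ++ (p ++ (listPow p (i - 1) ++ assemble x (bs.drop m))) := by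
    rw [← List.append_assoc p, ← hxp]
    exact hE
  have hlemS : (assemble x (as.take k)).length
      = ((as.take k).flatten).length + (k - 1) * (i * p.length) := by
    rw [length_assemble x (as.take k)
      (List.ne_nil_of_length_pos (by rw [List.length_take]; omega)),
      List.length_take, hx, length_listPow]
    congr 2
    omega
  have hlemZ : (assemble x (bs.take m)).length
      = ((bs.take m).flatten).length + (m - 1) * (i * p.length) := by
    rw [length_assemble x (bs.take m)
      (List.ne_nil_of_length_pos (by rw [List.length_take]; omega)),
      List.length_take, hx, length_listPow]
    congr 2
    omega
  have := cross hp (assemble x (as.take k)) (assemble x (as.drop k))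
    (assemble x (bs.take m)) (listPow p (i - 1) ++ assemble x (bs.drop m)) i hE2
    (by rw [hlemS, hlemZ]; exact h1) (by rw [hlemS, hlemZ]; exact h2)
  rwa [hlemS, hlemZ] at this

end CutPointAux

open CutPointAux in
/-- let `u₀ X u₁ ⋯ X uₙ = v₀ X v₁ ⋯ X vₙ` (n ≥ 1, u₀ = vₙ = ε)
have solution set exactly [p*] for a primitive word p, and let j be the
largest index in {0,…,n} such that |u₀|,…,|u_{j−1}|,|v₀|,…,|v_{j−1}| are all
divisible by |p|.  Then j > 0 and |v₀⋯v_{j−1}| − |u₀⋯uⱼ| ≤ |p|. -/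
theorem cut_point_periodic {Γ : Type*}
    (us vs : List (List Γ)) (hlen : us.length = vs.length) (hn : 2 ≤ us.length)
    (hu0 : us.head? = some []) (hvn : vs.getLast? = some [])
    (p : List Γ) (hp : Primitive p)
    (hsol : ∀ x : List Γ, assemble x us = assemble x vs ↔ ∃ i, x = listPow p i)
    (j : ℕ) (hj : j < us.length)
    (hdvd : ∀ i < j, p.length ∣ (us.getD i []).length ∧ p.length ∣ (vs.getD i []).length)
    (hjmax : ∀ j', j < j' → j' < us.length →
      ¬ ∀ i < j', p.length ∣ (us.getD i []).length ∧ p.length ∣ (vs.getD i []).length) :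
    0 < j ∧
      ((vs.take j).flatten).length ≤ ((us.take (j + 1)).flatten).length + p.length := by
  have hL : 0 < p.length := List.length_pos_iff.mpr hp.1
  have hgd0 : us.getD 0 [] = [] := by
    cases us with
    | nil => simp at hu0
    | cons c t =>
      have hc : c = [] := by simpa using hu0
      simp [hc]
  have hu1len : ((us.take 1).flatten).length = 0 := by
    rw [flatten_take_succ us 0 (by omega), hgd0]
    simp
  -- Part 1 : 0 < j
  have hj0 : 0 < j := by
    rcases Nat.eq_zero_or_pos j with rfl | h
    · exfalso
      apply hjmax 1 (by omega) (by omega)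
      intro i hi
      interval_cases i
      constructor
      · rw [hgd0]; simp
      · -- L ∣ |v₀|
        obtain ⟨i0, hi0⟩ : ∃ i0 : ℕ, i0 = (vs.getD 0 []).length + p.length + 1 := ⟨_, rfl⟩
        have hE := (hsol (listPow p i0)).mpr ⟨i0, rfl⟩
        have hv1len : ((vs.take 1).flatten).length = (vs.getD 0 []).length := by
          rw [flatten_take_succ vs 0 (by omega)]; simp
        have := block_cross hp us vs i0 1 1 (by omega) hE (by omega) (by omega)
          (by omega) (by omega)
          (by simp only [hu1len, hv1len]; omega)
          (by
            simp only [hu1len, hv1len, Nat.sub_self, Nat.zero_mul]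
            have : i0 ≤ i0 * p.length := Nat.le_mul_of_pos_right i0 hL
            omega)
        simpa [hu1len, hv1len] using this
    · exact h
  refine ⟨hj0, ?_⟩
  -- Part 2
  rcases eq_or_lt_of_le (show j + 1 ≤ us.length by omega) with heq | hlt
  · -- j + 1 = us.length : trivial by total lengths
    have hflat : us.flatten = vs.flatten := by
      have h0 := (hsol []).mpr ⟨0, rfl⟩
      rwa [assemble_nil_eq, assemble_nil_eq] at h0
    have h1 : us.take (j + 1) = us := by rw [heq, List.take_length]
    have h2 : vs.flatten = (vs.take j).flatten ++ (vs.drop j).flatten := by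
      rw [← List.flatten_append, List.take_append_drop]
    rw [h1, hflat]
    have := congrArg List.length h2
    rw [List.length_append] at this
    omega
  · -- j + 1 < us.length
    by_contra hcon
    push_neg at hcon
    obtain ⟨A, hA⟩ : ∃ A : ℕ, A = ((us.take j).flatten).length := ⟨_, rfl⟩
    obtain ⟨B, hB⟩ : ∃ B : ℕ, B = ((vs.take j).flatten).length := ⟨_, rfl⟩
    obtain ⟨A', hA'⟩ : ∃ A' : ℕ, A' = ((us.take (j + 1)).flatten).length := ⟨_, rfl⟩
    have hjv : j < vs.length := by omega
    have hA'eq : A' = A + (us.getD j []).length := by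
      rw [hA, hA']; exact flatten_take_succ us j (by omega)
    have hB'eq : ((vs.take (j + 1)).flatten).length = B + (vs.getD j []).length := by
      rw [hB]; exact flatten_take_succ vs j hjv
    have hdA : p.length ∣ A := by
      rw [hA]; exact dvd_flatten_take us p.length j (by omega) (fun i hi => (hdvd i hi).1)
    have hdB : p.length ∣ B := by
      rw [hB]; exact dvd_flatten_take vs p.length j (by omega) (fun i hi => (hdvd i hi).2)
    obtain ⟨i0, hi0⟩ : ∃ i0 : ℕ, i0 = B + (vs.getD j []).length + p.length + 1 := ⟨_, rfl⟩
    have hiL : i0 ≤ i0 * p.length := Nat.le_mul_of_pos_right i0 hL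
    have hE := (hsol (listPow p i0)).mpr ⟨i0, rfl⟩
    have hjm : j * (i0 * p.length) = (j - 1) * (i0 * p.length) + i0 * p.length := by
      conv_lhs => rw [show j = (j - 1) + 1 by omega]
      rw [Nat.succ_mul]
    have hdiL : p.length ∣ i0 * p.length := dvd_mul_left p.length i0
    -- Step 2a : L ∣ |u_j|
    have hdu : p.length ∣ (us.getD j []).length := by
      have hc := block_cross hp vs us i0 j (j + 1) (by omega) hE.symm hj0 hjv
        (by omega) (by omega)
        (by
          rw [← hA', ← hB, Nat.add_sub_cancel, hjm]
          omega)
        (by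
          rw [← hA', ← hB, Nat.add_sub_cancel, hjm]
          omega)
      rw [← hA', ← hB, Nat.add_sub_cancel] at hc
      -- hc : L ∣ (A' + j * (i0 * L)) - (B + (j-1) * (i0 * L))
      have hle : B + (j - 1) * (i0 * p.length) ≤ A' + j * (i0 * p.length) := by
        rw [hjm]; omega
      have hdZ : p.length ∣ B + (j - 1) * (i0 * p.length) :=
        hdB.add (hdiL.mul_left (j - 1))
      have hdS : p.length ∣ A' + j * (i0 * p.length) := by
        have := hdZ.add hc
        rwa [Nat.add_sub_cancel' hle] at this
      have hdA'' : p.length ∣ A' :=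
        (Nat.dvd_add_right (hdiL.mul_left j)).mp (by rwa [Nat.add_comm] at hdS)
      rw [hA'eq] at hdA''
      exact (Nat.dvd_add_right hdA).mp hdA''
    have hdA' : p.length ∣ A' := by rw [hA'eq]; exact hdA.add hdu
    -- Step 2b : L ∣ |v_j|
    have hdv : p.length ∣ (vs.getD j []).length := by
      have hc := block_cross hp us vs i0 (j + 1) (j + 1) (by omega) hE
        (by omega) hlt (by omega) (by omega)
        (by
          rw [← hA', hB'eq, Nat.add_sub_cancel]
          omega)
        (by
          rw [← hA', hB'eq, Nat.add_sub_cancel]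
          omega)
      rw [← hA', hB'eq, Nat.add_sub_cancel] at hc
      have hle : A' + j * (i0 * p.length)
          ≤ B + (vs.getD j []).length + j * (i0 * p.length) := by omega
      have hdS : p.length ∣ A' + j * (i0 * p.length) := hdA'.add (hdiL.mul_left j)
      have hdZ : p.length ∣ B + (vs.getD j []).length + j * (i0 * p.length) := by
        have := hdS.add hc
        rwa [Nat.add_sub_cancel' hle] at this
      have h3 : p.length ∣ B + (vs.getD j []).length :=
        (Nat.dvd_add_right (hdiL.mul_left j)).mp (by rwa [Nat.add_comm] at hdZ)
      exact (Nat.dvd_add_right hdB).mp h3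
    exact hjmax (j + 1) (by omega) hlt (fun i hi => by
      rcases Nat.lt_succ_iff_lt_or_eq.mp hi with h | rfl
      · exact hdvd i h
      · exact ⟨hdu, hdv⟩)
end

section
/- The one-variable equation X·X·b·a·a·b·a = a·a·b·a·X·b·X over the alphabet {a, b} has exactly two solution words: x = a and x = aaba. -/
namespace TwoSol

variable {Γ : Type*}

def pow (v : List Γ) : ℕ → List Γ
  | 0 => []
  | k+1 => v ++ pow v k

lemma pow_comm (v : List Γ) (k : ℕ) : pow v k ++ v = v ++ pow v k := by
  induction k with
  | zero => simp [pow]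
  | succ k ih => simp [pow, List.append_assoc, ih]

lemma pow_decomp (v : List Γ) (hv : v ≠ []) :
    ∀ n (x : List Γ), x.length ≤ n → x <+: v ++ x →
      ∃ k p, p <+: v ∧ p.length < v.length ∧ x = pow v k ++ p := by
  intro n
  induction n with
  | zero =>
    intro x hx _
    have : x = [] := List.length_eq_zero_iff.mp (Nat.le_zero.mp hx)
    subst this
    exact ⟨0, [], ⟨v, rfl⟩, List.length_pos_iff.mpr hv, rfl⟩
  | succ n ih =>
    intro x hx hpre
    by_cases hcase : x.length < v.length
    · exact ⟨0, x, List.prefix_of_prefix_length_le hpre (List.prefix_append v x) hcase.le,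
        hcase, by simp [pow]⟩
    · have hvx : v <+: x :=
        List.prefix_of_prefix_length_le (List.prefix_append v x) hpre (le_of_not_gt hcase)
      obtain ⟨y, rfl⟩ := hvx
      have hy : y <+: v ++ y := by
        obtain ⟨t, ht⟩ := hpre
        exact ⟨t, List.append_cancel_left (as := v) (by simpa [List.append_assoc] using ht)⟩
      have hv' : 0 < v.length := List.length_pos_iff.mpr hv
      have hylen : y.length ≤ n := by
        simp only [List.length_append] at hx; omega
      obtain ⟨k, p, h1, h2, h3⟩ := ih y hylen hy
      exact ⟨k+1, p, h1, h2, by simp [pow, h3, List.append_assoc]⟩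

lemma cancel {P v p w y : List Γ} (hPv : P ++ v = v ++ P)
    (h : (P ++ p) ++ (P ++ p) ++ w = v ++ (P ++ p) ++ y ++ (P ++ p)) :
    p ++ (P ++ (p ++ w)) = v ++ (p ++ (y ++ (P ++ p))) := by
  apply List.append_cancel_left (as := P)
  calc P ++ (p ++ (P ++ (p ++ w))) = (P ++ p) ++ (P ++ p) ++ w := by
        simp [List.append_assoc]
    _ = v ++ (P ++ p) ++ y ++ (P ++ p) := h
    _ = (v ++ P) ++ (p ++ (y ++ (P ++ p))) := by simp [List.append_assoc]
    _ = (P ++ v) ++ (p ++ (y ++ (P ++ p))) := by rw [hPv]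
    _ = P ++ (v ++ (p ++ (y ++ (P ++ p)))) := by simp [List.append_assoc]

end TwoSol

open TwoSol in
/-- over an alphabet with two distinct letters a, b, the
one-variable equation X·X·baaba = aaba·X·b·X has exactly the two solution
words a and aaba. -/
theorem two_solutions {Γ : Type*} (a b : Γ) (hab : a ≠ b) (x : List Γ) :
    x ++ x ++ [b, a, a, b, a] = [a, a, b, a] ++ x ++ [b] ++ x ↔
      (x = [a] ∨ x = [a, a, b, a]) := by
  constructor
  · intro h
    have h1 : x <+: (x ++ x ++ [b, a, a, b, a]) := ⟨x ++ [b, a, a, b, a], by simp⟩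
    rw [h] at h1
    have h2 : ([a, a, b, a] ++ x) <+: ([a, a, b, a] ++ x ++ [b] ++ x) := ⟨[b] ++ x, by simp⟩
    have h3 : x <+: [a, a, b, a] ++ x :=
      List.prefix_of_prefix_length_le h1 h2 (by simp; omega)
    obtain ⟨k, p, hp, hplen, rfl⟩ :=
      pow_decomp [a, a, b, a] (by simp) x.length _ le_rfl h3
    have h' := cancel (pow_comm [a, a, b, a] k) h
    obtain ⟨t, ht⟩ := hp
    rcases p with _ | ⟨c1, _ | ⟨c2, _ | ⟨c3, _ | ⟨c4, p'⟩⟩⟩⟩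
    · rcases k with _ | (_ | k)
      · simp [pow, hab, Ne.symm hab] at h'
      · right; simp [pow]
      · simp [pow, hab, Ne.symm hab, List.append_assoc] at h'
    · obtain ⟨rfl, rfl⟩ : c1 = a ∧ t = [a, b, a] := by simpa using ht
      rcases k with _ | k
      · left; simp [pow]
      · simp [pow, hab, Ne.symm hab, List.append_assoc] at h'
    · obtain ⟨rfl, rfl, rfl⟩ : c1 = a ∧ c2 = a ∧ t = [b, a] := by simpa using ht
      rcases k with _ | k
      · simp [pow, hab, Ne.symm hab] at h'
      · simp [pow, hab, Ne.symm hab, List.append_assoc] at h'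
    · obtain ⟨rfl, rfl, rfl, rfl⟩ : c1 = a ∧ c2 = a ∧ c3 = b ∧ t = [a] := by simpa using ht
      rcases k with _ | k
      · simp [pow, hab, Ne.symm hab] at h'
      · simp [pow, hab, Ne.symm hab, List.append_assoc] at h'
    · simp at hplen; omega
  · rintro (rfl | rfl) <;> rfl
end

section
/- The system of constant-free equations {XYZ = ZYX, XYYZ = ZYYX} in variables X, Y, Z is independent: it is not equivalent to either of its single-equation subsets. Specifically, over Γ = {a, b}: the morphism X ↦ a, Y ↦ b, Z ↦ aba satisfies XYZ = ZYX but not XYYZ = ZYYX, and the morphism X ↦ a, Y ↦ b, Z ↦ abba satisfies XYYZ = ZYYX but not XYZ = ZYX; moreover X ↦ a, Y ↦ b, Z ↦ a is a nonperiodic solution of the whole system. -/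
/-- The two sides of the equation XYZ = ZYX under the morphism (x, y, z). -/
def eq1 {Γ : Type*} (x y z : List Γ) : Prop := x ++ y ++ z = z ++ y ++ x

/-- The two sides of the equation XYYZ = ZYYX under the morphism (x, y, z). -/
def eq2 {Γ : Type*} (x y z : List Γ) : Prop :=
  x ++ y ++ y ++ z = z ++ y ++ y ++ x

lemma listPow_len {Γ : Type*} (w : List Γ) (k : ℕ) :
    (listPow w k).length = k * w.length := by
  simp [listPow, List.length_flatten, Function.comp]

lemma single_listPow {Γ : Type*} {c : Γ} {p : List Γ} {i : ℕ}
    (h : [c] = listPow p i) : p = [c] := by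
  have hl : i * p.length = 1 := by
    have := congrArg List.length h
    simpa [listPow_len] using this.symm
  have hi : i = 1 := Nat.eq_one_of_mul_eq_one_right hl
  subst hi
  simpa [listPow] using h.symm

/-- the system {XYZ = ZYX, XYYZ = ZYYX} is independent and has a
nonperiodic solution: X ↦ a, Y ↦ b, Z ↦ aba solves the first equation but not
the second; X ↦ a, Y ↦ b, Z ↦ abba solves the second but not the first; and
X ↦ a, Y ↦ b, Z ↦ a is a nonperiodic solution of the whole system. -/
theorem system_independent {Γ : Type*} (a b : Γ) (hab : a ≠ b) :
    (eq1 [a] [b] [a, b, a] ∧ ¬ eq2 [a] [b] [a, b, a]) ∧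
    (eq2 [a] [b] [a, b, b, a] ∧ ¬ eq1 [a] [b] [a, b, b, a]) ∧
    (eq1 [a] [b] [a] ∧ eq2 [a] [b] [a] ∧
      ¬ ∃ (p : List Γ) (i j k : ℕ),
        [a] = listPow p i ∧ [b] = listPow p j ∧ [a] = listPow p k) := by
  refine ⟨⟨by simp [eq1], fun h => ?_⟩, ⟨by simp [eq2], fun h => ?_⟩,
    by simp [eq1], by simp [eq2], fun ⟨p, i, j, k, ha, hb, _⟩ => ?_⟩
  · simp [eq2] at h
    exact hab h.1.symm
  · simp [eq1] at h
    exact hab h.1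
  · have h1 := single_listPow ha
    have h2 := single_listPow hb
    rw [h1] at h2
    exact hab (List.singleton_injective h2)
end
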